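/- For any two probability density functions f, g on [0,1], |f̄ − ḡ| ≤ √(4ḡ + D△(f‖g)) · √(D△(f‖g)), where f̄, ḡ are the means and D△ is the triangular discrimination. -/

import Mathlib

open MeasureTheory

/-!
Writing `f̄ - ḡ = ∫ y (f - g)` and splitting `y (f - g) = y √(f + g) · (f - g) / √(f + g)`,
Cauchy–Schwarz gives (△₁): `|f̄ - ḡ| ≤ √(∫ y² (f + g)) √D△ ≤ √(f̄ + ḡ) √D△`, using `y² ≤ y` on `[0,1]`.
AM–GM applied to (△₁) yields `f̄ ≤ 3ḡ + D△`, i.e. `f̄ + ḡ ≤ 4ḡ + D△`, which is substituted back.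
Cauchy–Schwarz itself comes from the pointwise AM–GM bound
`2 y (f - g) t ≤ y² (f + g) t² + (f - g)² / (f + g)`, integrated and read as a nonnegative
quadratic in `t`, whose discriminant is then `≤ 0`.
-/

lemma two_mul_mul_sub_mul_le {a b : ℝ} (ha : 0 ≤ a) (hb : 0 ≤ b) (s t : ℝ) :
    2 * (s * (a - b)) * t ≤ s ^ 2 * (a + b) * t ^ 2 + (a - b) ^ 2 / (a + b) := by
  rcases (add_nonneg ha hb).eq_or_lt with hab | hab
  · obtain rfl : a = 0 := by linarith
    obtain rfl : b = 0 := by linarith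
    simp
  · have hsq : s ^ 2 * (a + b) * t ^ 2 + (a - b) ^ 2 / (a + b) - 2 * (s * (a - b)) * t =
        (s * t * (a + b) - (a - b)) ^ 2 / (a + b) := by
      field_simp
      ring
    have : 0 ≤ (s * t * (a + b) - (a - b)) ^ 2 / (a + b) := by positivity
    linarith

lemma abs_le_sqrt_mul_sqrt_of_forall {X A D : ℝ} (hA : 0 ≤ A)
    (h : ∀ t, 2 * X * t ≤ A * t ^ 2 + D) : |X| ≤ √A * √D := by
  have hdisc := discrim_le_zero (K := ℝ) (a := A) (b := -(2 * X)) (c := D)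
    fun t => by nlinarith [h t]
  rw [discrim] at hdisc
  rw [← Real.sqrt_mul hA, ← Real.sqrt_sq_eq_abs]
  exact Real.sqrt_le_sqrt (by nlinarith)

lemma abs_integral_mul_sub_le_sqrt_mul_sqrt {α : Type*} [MeasurableSpace α] {μ : Measure α}
    {φ f g : α → ℝ} (hf : ∀ x, 0 ≤ f x) (hg : ∀ x, 0 ≤ g x)
    (hφ : Integrable (fun x => φ x * (f x - g x)) μ)
    (hφ2 : Integrable (fun x => φ x ^ 2 * (f x + g x)) μ)
    (hD : Integrable (fun x => (f x - g x) ^ 2 / (f x + g x)) μ) :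
    |∫ x, φ x * (f x - g x) ∂μ| ≤
      √(∫ x, φ x ^ 2 * (f x + g x) ∂μ) * √(∫ x, (f x - g x) ^ 2 / (f x + g x) ∂μ) := by
  refine abs_le_sqrt_mul_sqrt_of_forall
    (integral_nonneg fun x => mul_nonneg (sq_nonneg _) (add_nonneg (hf x) (hg x))) fun t => ?_
  calc 2 * (∫ x, φ x * (f x - g x) ∂μ) * t = ∫ x, 2 * (φ x * (f x - g x)) * t ∂μ := by
        rw [integral_mul_const, integral_const_mul]
    _ ≤ ∫ x, (φ x ^ 2 * (f x + g x) * t ^ 2 + (f x - g x) ^ 2 / (f x + g x)) ∂μ :=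
        integral_mono ((hφ.const_mul 2).mul_const t) ((hφ2.mul_const _).add hD)
          fun x => two_mul_mul_sub_mul_le (hf x) (hg x) _ _
    _ = _ := by rw [integral_add (hφ2.mul_const _) hD, integral_mul_const]

theorem tri_disc_ineq_one (μ : Measure ℝ) (f g : ℝ → ℝ)
    (hsupp : μ (Set.Icc (0:ℝ) 1)ᶜ = 0)
    (hf0 : ∀ y, 0 ≤ f y) (hg0 : ∀ y, 0 ≤ g y)
    (hmf : Integrable (fun y => y * f y) μ) (hmg : Integrable (fun y => y * g y) μ)
    (hD : Integrable (fun y => (f y - g y) ^ 2 / (f y + g y)) μ) :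
    |(∫ y, y * f y ∂μ) - ∫ y, y * g y ∂μ| ≤
      √((∫ y, y * f y ∂μ) + ∫ y, y * g y ∂μ) * √(∫ y, (f y - g y) ^ 2 / (f y + g y) ∂μ) := by
  have hunit : ∀ᵐ y ∂μ, y ∈ Set.Icc (0:ℝ) 1 := mem_ae_iff.mpr hsupp
  have hmfg : Integrable (fun y => y * (f y + g y)) μ := by
    simpa only [mul_add, Pi.add_def] using hmf.add hmg
  have hsq_le : ∀ᵐ y ∂μ, ‖y ^ 2 * (f y + g y)‖ ≤ y * (f y + g y) := by
    filter_upwards [hunit] with y ⟨hy0, hy1⟩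
    have hfg := add_nonneg (hf0 y) (hg0 y)
    rw [Real.norm_of_nonneg (by positivity)]
    exact mul_le_mul_of_nonneg_right (by nlinarith) hfg
  have hsq : Integrable (fun y => y ^ 2 * (f y + g y)) μ :=
    hmfg.mono' (continuous_id.aestronglyMeasurable.mul hmfg.aestronglyMeasurable |>.congr
      (.of_forall fun y => by simp only [id, Pi.mul_apply]; ring)) hsq_le
  have hCS := abs_integral_mul_sub_le_sqrt_mul_sqrt hf0 hg0
    (by simpa only [mul_sub, Pi.sub_def] using hmf.sub hmg) hsq hD
  simp only [mul_sub, integral_sub hmf hmg] at hCS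
  refine hCS.trans (mul_le_mul_of_nonneg_right (Real.sqrt_le_sqrt ?_) (Real.sqrt_nonneg _))
  rw [← integral_add hmf hmg]
  simp only [← mul_add]
  exact integral_mono_ae hsq hmfg (hsq_le.mono fun y hy => (le_abs_self _).trans hy)

lemma abs_sub_le_sqrt_four_mul_add_mul_sqrt {F G D : ℝ} (hG : 0 ≤ G) (hD : 0 ≤ D)
    (h : |F - G| ≤ √(F + G) * √D) : |F - G| ≤ √(4 * G + D) * √D := by
  have hFG : F + G ≤ 4 * G + D := by
    rcases le_or_gt (F + G) 0 with hneg | hpos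
    · linarith
    nlinarith [le_abs_self (F - G), sq_nonneg (√(F + G) - √D), Real.sq_sqrt hpos.le,
      Real.sq_sqrt hD]
  exact h.trans (mul_le_mul_of_nonneg_right (Real.sqrt_le_sqrt hFG) (Real.sqrt_nonneg _))

theorem tri_disc_ineq_two_general (μ : Measure ℝ) (f g : ℝ → ℝ)
    (hsupp : μ (Set.Icc (0:ℝ) 1)ᶜ = 0)
    (hf0 : ∀ y, 0 ≤ f y) (hg0 : ∀ y, 0 ≤ g y)
    (hmf : Integrable (fun y => y * f y) μ) (hmg : Integrable (fun y => y * g y) μ)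
    (hD : Integrable (fun y => (f y - g y) ^ 2 / (f y + g y)) μ) :
    |(∫ y, y * f y ∂μ) - ∫ y, y * g y ∂μ| ≤
      Real.sqrt (4 * (∫ y, y * g y ∂μ) + ∫ y, (f y - g y) ^ 2 / (f y + g y) ∂μ) *
        Real.sqrt (∫ y, (f y - g y) ^ 2 / (f y + g y) ∂μ) := by
  have hG : 0 ≤ ∫ y, y * g y ∂μ := integral_nonneg_of_ae <| by
    filter_upwards [mem_ae_iff.mpr hsupp] with y hy using mul_nonneg hy.1 (hg0 y)
  have hD0 : 0 ≤ ∫ y, (f y - g y) ^ 2 / (f y + g y) ∂μ :=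
    integral_nonneg fun y => div_nonneg (sq_nonneg _) (add_nonneg (hf0 y) (hg0 y))
  exact abs_sub_le_sqrt_four_mul_add_mul_sqrt hG hD0
    (tri_disc_ineq_one μ f g hsupp hf0 hg0 hmf hmg hD)

/-- Inequality (△₂): for densities `f, g` on `[0,1]` w.r.t. a dominating measure `μ`,
`|f̄ − ḡ| ≤ √(4ḡ + D△(f‖g)) · √(D△(f‖g))`. -/
theorem tri_disc_ineq_two (μ : Measure ℝ) (f g : ℝ → ℝ)
    (hsupp : μ (Set.Icc (0:ℝ) 1)ᶜ = 0)
    (hf0 : ∀ y, 0 ≤ f y) (hg0 : ∀ y, 0 ≤ g y)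
    (hfi : Integrable f μ) (hgi : Integrable g μ)
    (hf1 : ∫ y, f y ∂μ = 1) (hg1 : ∫ y, g y ∂μ = 1)
    (hmf : Integrable (fun y => y * f y) μ) (hmg : Integrable (fun y => y * g y) μ)
    (hD : Integrable (fun y => (f y - g y) ^ 2 / (f y + g y)) μ) :
    |(∫ y, y * f y ∂μ) - ∫ y, y * g y ∂μ| ≤
      Real.sqrt (4 * (∫ y, y * g y ∂μ) + ∫ y, (f y - g y) ^ 2 / (f y + g y) ∂μ) *
        Real.sqrt (∫ y, (f y - g y) ^ 2 / (f y + g y) ∂μ) :=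
  tri_disc_ineq_two_general μ f g hsupp hf0 hg0 hmf hmg hD
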